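/- arXiv:0901.0383 — 3 statements merged into one kernel-verified Lean document; each statement's English description precedes it below -/
import Mathlib

section
/- In the density-representation setting, assume that for some c′ ∈ (0,1) and z₀ > 1 one has g(x) ≤ c′ x² for all x > z₀, and that moreover g(x) ≥ c₁ x^p for all x > z₀, where c₁ > 0 and p < 2. Then there is a constant K″ > 0 (one may take K″ = (E|X|/2) · (c′)^{c′}(1+c′)^{−1−c′} · A(z₀)) such that for every x > z₀: P[X > x] ≥ K″ · x^{−1} · exp(−x^{2−p}/((2−p) c₁)). -/
open MeasureTheory


open Set


lemma exp_integral_key (f F : ℝ → ℝ) (x y : ℝ) (hxy : x < y)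
    (hfm : Measurable f) (hf0 : ∀ t, 0 ≤ f t)
    (hfi : IntegrableOn f (Set.Icc x y) volume)
    (hFc : ContinuousOn F (Set.Icc x y))
    (hFint : ∀ u v, x ≤ u → u ≤ v → v ≤ y → ∫ t in Set.Ioc u v, f t = F v - F u) :
    ∫ t in Set.Ioc x y, f t * Real.exp (-F t) = Real.exp (-F x) - Real.exp (-F y) := by
  have hmono : ∀ u ∈ Icc x y, ∀ v ∈ Icc x y, u ≤ v → F u ≤ F v := by
    intro u hu v hv huv
    have h1 : 0 ≤ ∫ t in Ioc u v, f t :=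
      setIntegral_nonneg measurableSet_Ioc fun t _ => hf0 t
    have := hFint u v hu.1 huv hv.2
    linarith
  have hFxy : F x ≤ F y :=
    hmono x ⟨le_rfl, hxy.le⟩ y ⟨hxy.le, le_rfl⟩ hxy.le
  set ν : Measure ℝ := (volume.restrict (Ioc x y)).withDensity
      (fun t => ENNReal.ofReal (f t)) with hν
  have hfiIoc : IntegrableOn f (Ioc x y) volume := hfi.mono_set Ioc_subset_Icc_self
  have hνapp : ∀ s : Set ℝ, ν s = ∫⁻ t in s ∩ Ioc x y, ENNReal.ofReal (f t) ∂volume := by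
    intro s
    rw [hν, withDensity_apply' _ s, Measure.restrict_restrict' measurableSet_Ioc]
  have hlin : ∀ u v : ℝ, x ≤ u → u ≤ v → v ≤ y →
      ∫⁻ t in Ioc u v, ENNReal.ofReal (f t) ∂volume = ENNReal.ofReal (F v - F u) := by
    intro u v hu huv hv
    rw [← hFint u v hu huv hv]
    exact (ofReal_integral_eq_lintegral_ofReal
      (hfi.mono_set fun t ht => ⟨hu.trans ht.1.le, ht.2.trans hv⟩)
      (Filter.Eventually.of_forall fun t => hf0 t)).symm
  haveI hfin : IsFiniteMeasure ν := by
    constructor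
    rw [hνapp univ, univ_inter, hlin x y le_rfl hxy.le le_rfl]
    exact ENNReal.ofReal_lt_top
  have hFae : AEMeasurable F ν := by
    have h1 : AEMeasurable F (volume.restrict (Ioc x y)) :=
      (hFc.mono Ioc_subset_Icc_self).aemeasurable measurableSet_Ioc
    exact h1.mono' (withDensity_absolutelyContinuous _ _)
  have hmapν : Measure.map F ν = volume.restrict (Ioc (F x) (F y)) := by
    haveI : IsFiniteMeasure (Measure.map F ν) := by
      constructor
      rw [Measure.map_apply_of_aemeasurable hFae MeasurableSet.univ, preimage_univ]
      exact measure_lt_top ν univ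
    refine Measure.ext_of_Iic _ _ (fun c => ?_)
    rw [Measure.map_apply_of_aemeasurable hFae measurableSet_Iic,
      Measure.restrict_apply measurableSet_Iic, hνapp]
    have hIR : Iic c ∩ Ioc (F x) (F y) = Ioc (F x) (min c (F y)) := by
      ext u
      simp only [mem_inter_iff, mem_Iic, mem_Ioc, le_min_iff]
      tauto
    rcases le_or_gt (F x) c with hc | hc
    · set S : Set ℝ := Icc x y ∩ F ⁻¹' Iic c with hS
      have hSclosed : IsClosed S :=
        hFc.preimage_isClosed_of_isClosed isClosed_Icc isClosed_Iic
      have hScompact : IsCompact S :=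
        isCompact_Icc.of_isClosed_subset hSclosed inter_subset_left
      have hSne : S.Nonempty := ⟨x, ⟨le_rfl, hxy.le⟩, hc⟩
      set τ := sSup S with hτdef
      have hτS : τ ∈ S := hScompact.sSup_mem hSne
      have hbdd : BddAbove S := hScompact.bddAbove
      have hxτ : x ≤ τ := hτS.1.1
      have hτy : τ ≤ y := hτS.1.2
      have hFτ : F τ ≤ c := hτS.2
      have hset : F ⁻¹' Iic c ∩ Ioc x y = Ioc x τ := by
        ext t
        constructor
        · rintro ⟨htc, hxt, hty⟩
          exact ⟨hxt, le_csSup hbdd ⟨⟨hxt.le, hty⟩, htc⟩⟩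
        · rintro ⟨hxt, htτ⟩
          have hty : t ≤ y := htτ.trans hτy
          have : F t ≤ F τ := hmono t ⟨hxt.le, hty⟩ τ ⟨hxτ, hτy⟩ htτ
          exact ⟨this.trans hFτ, hxt, hty⟩
      have hFτval : F τ = min c (F y) := by
        rcases le_or_gt (F y) c with hyc | hyc
        · have : y ≤ τ := le_csSup hbdd ⟨⟨hxy.le, le_rfl⟩, hyc⟩
          have hτy' : τ = y := le_antisymm hτy this
          rw [hτy', min_eq_right hyc]
        · rw [min_eq_left hyc.le]
          refine le_antisymm hFτ ?_
          by_contra! hlt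
          have hτlty : τ < y := by
            rcases lt_or_eq_of_le hτy with h | h
            · exact h
            · exact absurd (h ▸ hlt) (not_lt.mpr hyc.le)
          have hcw : ContinuousWithinAt F (Icc x y) τ := hFc τ ⟨hxτ, hτy⟩
          have hmem : F ⁻¹' Iio c ∈ nhdsWithin τ (Icc x y) := hcw (Iio_mem_nhds hlt)
          rw [mem_nhdsWithin] at hmem
          obtain ⟨U, hUopen, hτU, hUsub⟩ := hmem
          obtain ⟨ε, hε, hball⟩ := Metric.isOpen_iff.mp hUopen τ hτU
          set t := min (τ + ε / 2) ((τ + y) / 2) with ht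
          have hτt : τ < t := by
            apply lt_min <;> linarith
          have hty : t ≤ y := by
            have : t ≤ (τ + y) / 2 := min_le_right _ _
            linarith
          have htball : t ∈ Metric.ball τ ε := by
            rw [Metric.mem_ball, Real.dist_eq, abs_lt]
            have h1 : t ≤ τ + ε / 2 := min_le_left _ _
            constructor <;> nlinarith
          have htU : t ∈ U := hball htball
          have htS : t ∈ S :=
            ⟨⟨hxτ.trans hτt.le, hty⟩,
              le_of_lt (show F t < c from hUsub ⟨htU, hxτ.trans hτt.le, hty⟩)⟩
          have : t ≤ τ := le_csSup hbdd htS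
          linarith
      rw [hset, hIR, hlin x τ le_rfl hxτ hτy, Real.volume_Ioc, hFτval]
    · have hset : F ⁻¹' Iic c ∩ Ioc x y = ∅ := by
        ext t
        simp only [mem_inter_iff, mem_preimage, mem_Iic, mem_Ioc, mem_empty_iff_false,
          iff_false, not_and]
        intro htc hxt hty
        have : F x ≤ F t := hmono x ⟨le_rfl, hxy.le⟩ t ⟨hxt.le, hty⟩ hxt.le
        linarith
      rw [hset, hIR, Real.volume_Ioc]
      have : min c (F y) - F x ≤ 0 := by
        have := min_le_left c (F y); linarith
      simp [ENNReal.ofReal_eq_zero.mpr this]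
  have hsm : AEStronglyMeasurable (fun u : ℝ => Real.exp (-u)) (Measure.map F ν) :=
    (Real.continuous_exp.comp continuous_neg).aestronglyMeasurable
  calc ∫ t in Ioc x y, f t * Real.exp (-F t)
      = ∫ t in Ioc x y, (f t).toNNReal • Real.exp (-F t) := by
        refine integral_congr_ae (Filter.Eventually.of_forall fun t => ?_)
        simp only [NNReal.smul_def, Real.coe_toNNReal _ (hf0 t), smul_eq_mul]
    _ = ∫ t, Real.exp (-F t) ∂ν :=
        (integral_withDensity_eq_integral_smul hfm.real_toNNReal _).symm
    _ = ∫ u, Real.exp (-u) ∂(Measure.map F ν) := (integral_map hFae hsm).symm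
    _ = ∫ u in Ioc (F x) (F y), Real.exp (-u) := by rw [hmapν]
    _ = ∫ u in (F x)..(F y), Real.exp (-u) := (intervalIntegral.integral_of_le hFxy).symm
    _ = Real.exp (-F x) - Real.exp (-F y) := by
        rw [intervalIntegral.integral_comp_neg (fun u => Real.exp u), integral_exp]


/-- **Density-representation setting** (Nourdin–Viens): `X` is a centered integrable random
variable whose law has Lebesgue density `ρ`, positive on `(a, ∞)` (with `−∞ ≤ a < 0`) and
vanishing outside; `g > 0` on `(a, ∞)` with `y ↦ y/g(y)` locally integrable there;
`A(x) = exp(−∫_0^x y/g(y) dy)`; and `ρ(x) = (E|X|/2) A(x)/g(x)` a.e. on `(a, ∞)`. -/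
theorem tail_lower_bound_stretched_exp {Ω : Type*} {mΩ : MeasurableSpace Ω} (μ : Measure Ω)
    [IsProbabilityMeasure μ] (X : Ω → ℝ) (hXm : Measurable X)
    (hXint : Integrable X μ) (hcen : ∫ ω, X ω ∂μ = 0)
    (ρ g : ℝ → ℝ) (a : EReal) (ha : a < 0)
    (hmap : Measure.map X μ = volume.withDensity fun x => ENNReal.ofReal (ρ x))
    (hρpos : ∀ x : ℝ, a < (x : EReal) → 0 < ρ x)
    (hρzero : ∀ x : ℝ, (x : EReal) ≤ a → ρ x = 0)
    (hgpos : ∀ x : ℝ, a < (x : EReal) → 0 < g x)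
    (hloc : ∀ u v : ℝ, a < (u : EReal) → IntegrableOn (fun y => y / g y) (Set.Icc u v) volume)
    (A : ℝ → ℝ) (hA : ∀ x : ℝ, A x = Real.exp (-∫ y in (0 : ℝ)..x, y / g y))
    (hρA : ∀ᵐ x : ℝ ∂volume, a < (x : EReal) →
      ρ x = (∫ ω, |X ω| ∂μ) / 2 * A x / g x)
    (c' c₁ p z₀ : ℝ) (hc' : c' ∈ Set.Ioo (0 : ℝ) 1) (hc₁ : 0 < c₁) (hp : p < 2)
    (hz₀ : 1 < z₀)
    (hgub : ∀ x : ℝ, z₀ < x → g x ≤ c' * x ^ 2)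
    (hglb : ∀ x : ℝ, z₀ < x → c₁ * x ^ p ≤ g x) :
    ∀ x : ℝ, z₀ < x →
      (μ {ω | x < X ω}).toReal ≥
        ((∫ ω, |X ω| ∂μ) / 2 * (c' ^ c' / (1 + c') ^ (1 + c')) * A z₀) *
          (x⁻¹ * Real.exp (-(x ^ (2 - p)) / ((2 - p) * c₁))) := by
  obtain ⟨hc'0, hc'1⟩ := hc'
  intro x hx
  have hz0 : (0:ℝ) < z₀ := by linarith
  have hx0 : (0:ℝ) < x := by linarith
  set M : ℝ := (∫ ω, |X ω| ∂μ) / 2 with hM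
  have hM0 : 0 ≤ M :=
    div_nonneg (integral_nonneg fun ω => abs_nonneg _) (by norm_num)
  have haz : ∀ u : ℝ, 0 ≤ u → a < (u : EReal) :=
    fun u hu => lt_of_lt_of_le ha (by exact_mod_cast hu)
  set f : ℝ → ℝ := fun t => t / g t with hfdef
  have hfi : ∀ u v : ℝ, 0 ≤ u → IntegrableOn f (Icc u v) volume :=
    fun u v hu => hloc u v (haz u hu)
  have hii : ∀ u v : ℝ, 0 ≤ u → u ≤ v → IntervalIntegrable f volume u v := by
    intro u v hu huv
    have h1 := hfi u v hu
    rw [← uIcc_of_le huv] at h1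
    exact h1.intervalIntegrable
  set F : ℝ → ℝ := fun t => ∫ s in (0:ℝ)..t, f s with hFdef
  have hAF : ∀ t, A t = Real.exp (-F t) := fun t => hA t
  have hFsub : ∀ u v : ℝ, 0 ≤ u → u ≤ v → F v - F u = ∫ s in u..v, f s := by
    intro u v hu huv
    have h1 := intervalIntegral.integral_add_adjacent_intervals
      (hii 0 u le_rfl hu) (hii u v hu huv)
    simp only [hFdef]
    linarith
  have hFIoc : ∀ u v : ℝ, 0 ≤ u → u ≤ v → ∫ t in Ioc u v, f t = F v - F u := by
    intro u v hu huv
    rw [hFsub u v hu huv]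
    exact (intervalIntegral.integral_of_le huv).symm
  have hgpos' : ∀ t : ℝ, 0 < t → 0 < g t := fun t ht => hgpos t (haz t ht.le)
  have hfpos : ∀ t : ℝ, 0 < t → 0 < f t := fun t ht => div_pos ht (hgpos' t ht)
  set L : ℝ := (1 + c') / c' with hLdef
  have hL1 : 1 < L := by rw [hLdef, lt_div_iff₀ hc'0]; linarith
  have hL0 : 0 < L := zero_lt_one.trans hL1
  set lam : ℝ := L ^ c' with hlamdef
  have hlam1 : 1 < lam := by
    rw [hlamdef]
    exact (Real.one_lt_rpow_iff_of_pos hL0).mpr (Or.inl ⟨hL1, hc'0⟩)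
  set y : ℝ := lam * x with hydef
  have hxy : x < y := by rw [hydef]; nlinarith
  have hy0 : 0 < y := hx0.trans hxy
  -- measurable version of f
  have hbase : AEStronglyMeasurable f (volume.restrict (Icc 0 y)) :=
    (hfi 0 y le_rfl).aestronglyMeasurable
  set f0 : ℝ → ℝ := fun t => max (hbase.mk f t) 0 with hf0def
  have hf0m : Measurable f0 :=
    hbase.stronglyMeasurable_mk.measurable.max measurable_const
  have hf0nonneg : ∀ t, 0 ≤ f0 t := fun t => le_max_right _ _
  have hsub0 : Ioc x y ⊆ Icc 0 y := fun t ht => ⟨(hx0.trans ht.1).le, ht.2⟩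
  have heq : f0 =ᵐ[volume.restrict (Ioc x y)] f := by
    have h2 : f =ᵐ[volume.restrict (Ioc x y)] hbase.mk f :=
      ae_restrict_of_ae_restrict_of_subset hsub0 hbase.ae_eq_mk
    have h3 : ∀ᵐ t ∂(volume.restrict (Ioc x y)), t ∈ Ioc x y :=
      ae_restrict_mem measurableSet_Ioc
    filter_upwards [h2, h3] with t h2t h3t
    simp only [hf0def, ← h2t, max_eq_left (hfpos t (hx0.trans h3t.1)).le]
  have hFint0 : ∀ u v : ℝ, x ≤ u → u ≤ v → v ≤ y → ∫ t in Ioc u v, f0 t = F v - F u := by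
    intro u v hxu huv hvy
    have hsub : Ioc u v ⊆ Ioc x y := fun t ht => ⟨lt_of_le_of_lt hxu ht.1, ht.2.trans hvy⟩
    calc ∫ t in Ioc u v, f0 t = ∫ t in Ioc u v, f t :=
          integral_congr_ae (ae_restrict_of_ae_restrict_of_subset hsub heq)
      _ = F v - F u := hFIoc u v (hx0.le.trans hxu) huv
  have hFc : ContinuousOn F (Icc x y) := by
    have h1 : ContinuousOn (fun t => ∫ s in x..t, f s) (Icc x y) := by
      have h0 := intervalIntegral.continuousOn_primitive_interval
        (μ := volume) (f := f) (a := x) (b := y)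
        (by rw [uIcc_of_le hxy.le]; exact hfi x y hx0.le)
      rwa [uIcc_of_le hxy.le] at h0
    have h2 : EqOn F (fun t => F x + ∫ s in x..t, f s) (Icc x y) := by
      intro t ht
      have := hFsub x t hx0.le ht.1
      simp only
      linarith
    exact (continuousOn_const.add h1).congr h2
  have hf0i : IntegrableOn f0 (Icc x y) volume := by
    have hsub : Icc x y ⊆ Icc 0 y := Icc_subset_Icc hx0.le le_rfl
    have hmk : IntegrableOn (hbase.mk f) (Icc x y) volume :=
      (hfi x y hx0.le).congr (ae_restrict_of_ae_restrict_of_subset hsub hbase.ae_eq_mk)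
    exact hmk.pos_part
  have hkey : ∫ t in Ioc x y, f0 t * Real.exp (-F t)
      = Real.exp (-F x) - Real.exp (-F y) :=
    exp_integral_key f0 F x y hxy hf0m hf0nonneg hf0i hFc hFint0
  have hFmono : ∀ u v : ℝ, 0 ≤ u → u ≤ v → F u ≤ F v := by
    intro u v hu huv
    have h1 : 0 ≤ ∫ t in Ioc u v, f t :=
      setIntegral_nonneg measurableSet_Ioc fun t ht => (hfpos t (lt_of_le_of_lt hu ht.1)).le
    have := hFIoc u v hu huv
    linarith
  have hcontexp : ContinuousOn (fun t => Real.exp (-F t)) (Ioc x y) :=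
    Real.continuous_exp.comp_continuousOn (hFc.mono Ioc_subset_Icc_self).neg
  have hintprod : IntegrableOn (fun t => f0 t * Real.exp (-F t)) (Ioc x y) volume := by
    have h1 : IntegrableOn f0 (Ioc x y) volume := hf0i.mono_set Ioc_subset_Icc_self
    have hbd : ∀ᵐ t ∂(volume.restrict (Ioc x y)), ‖Real.exp (-F t)‖ ≤ Real.exp (-F x) := by
      filter_upwards [ae_restrict_mem measurableSet_Ioc] with t ht
      rw [Real.norm_eq_abs, abs_of_pos (Real.exp_pos _)]
      exact Real.exp_le_exp.mpr (neg_le_neg (hFmono x t hx0.le ht.1.le))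
    have h2 := Integrable.bdd_mul h1 (hcontexp.aestronglyMeasurable measurableSet_Ioc) hbd
    exact h2.congr (Filter.Eventually.of_forall fun t => mul_comm _ _)
  set E : ℝ := Real.exp (-(x ^ (2 - p)) / ((2 - p) * c₁)) with hEdef
  set C : ℝ := M / y * (Real.exp (-F x) - Real.exp (-F y)) with hCdef
  have hC0 : 0 ≤ C := by
    apply mul_nonneg (div_nonneg hM0 hy0.le)
    have h1 := hFmono x y hx0.le hxy.le
    have h2 := Real.exp_le_exp.mpr (neg_le_neg h1)
    linarith
  have hμlow : ENNReal.ofReal C ≤ μ {ω | x < X ω} := by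
    have hmeas : μ {ω | x < X ω}
        = (volume.withDensity fun t => ENNReal.ofReal (ρ t)) (Ioi x) := by
      rw [show {ω | x < X ω} = X ⁻¹' (Ioi x) from rfl,
        ← Measure.map_apply hXm measurableSet_Ioi, hmap]
    rw [hmeas, withDensity_apply _ measurableSet_Ioi]
    have hstep1 : ∫⁻ t in Ioc x y, ENNReal.ofReal (M / y * (f0 t * Real.exp (-F t))) ∂volume
        ≤ ∫⁻ t in Ioc x y, ENNReal.ofReal (ρ t) ∂volume := by
      apply lintegral_mono_ae
      have hρres : ∀ᵐ t : ℝ ∂(volume.restrict (Ioc x y)),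
          (a < (t : EReal) → ρ t = M * A t / g t) := ae_restrict_of_ae hρA
      filter_upwards [hρres, heq, ae_restrict_mem measurableSet_Ioc] with t h1 h2 h3
      have ht0 : 0 < t := hx0.trans h3.1
      have hgt : 0 < g t := hgpos' t ht0
      have hρt : ρ t = M * A t / g t := h1 (haz t ht0.le)
      apply ENNReal.ofReal_le_ofReal
      rw [hρt, hAF t, h2]
      have hEt : (0:ℝ) ≤ Real.exp (-F t) := (Real.exp_pos _).le
      have h4 : t / y ≤ 1 := (div_le_one hy0).mpr h3.2
      have h5 : M / y * (f t * Real.exp (-F t))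
          = M * Real.exp (-F t) / g t * (t / y) := by
        simp only [hfdef]
        field_simp
      rw [h5]
      calc M * Real.exp (-F t) / g t * (t / y)
          ≤ M * Real.exp (-F t) / g t * 1 :=
            mul_le_mul_of_nonneg_left h4 (div_nonneg (mul_nonneg hM0 hEt) hgt.le)
        _ = M * Real.exp (-F t) / g t := mul_one _
    calc ENNReal.ofReal C
        = ∫⁻ t in Ioc x y, ENNReal.ofReal (M / y * (f0 t * Real.exp (-F t))) ∂volume := by
          have hint2 : Integrable (fun t => M / y * (f0 t * Real.exp (-F t)))
              (volume.restrict (Ioc x y)) := hintprod.const_mul _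
          have hnn : 0 ≤ᵐ[volume.restrict (Ioc x y)]
              fun t => M / y * (f0 t * Real.exp (-F t)) :=
            Filter.Eventually.of_forall fun t =>
              mul_nonneg (div_nonneg hM0 hy0.le)
                (mul_nonneg (hf0nonneg t) (Real.exp_pos _).le)
          rw [← ofReal_integral_eq_lintegral_ofReal hint2 hnn,
            integral_const_mul, hkey, hCdef]
      _ ≤ ∫⁻ t in Ioc x y, ENNReal.ofReal (ρ t) ∂volume := hstep1
      _ ≤ ∫⁻ t in Ioi x, ENNReal.ofReal (ρ t) ∂volume :=
          lintegral_mono_set (fun t ht => ht.1)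
  have hCreal : C ≤ (μ {ω | x < X ω}).toReal := by
    have h1 := ENNReal.toReal_mono (measure_ne_top μ _) hμlow
    rwa [ENNReal.toReal_ofReal hC0] at h1
  have hA0 : ∀ t, 0 < A t := fun t => (hAF t) ▸ Real.exp_pos _
  have h1c'0 : (0:ℝ) < 1 + c' := by linarith
  -- lower bound on F y - F x
  have hFyx : Real.log L ≤ F y - F x := by
    have hcompare : ∫ t in Ioc x y, (c' * t)⁻¹ ∂volume ≤ ∫ t in Ioc x y, f t ∂volume := by
      apply setIntegral_mono_on
      · have hco : ContinuousOn (fun t : ℝ => (c' * t)⁻¹) (Icc x y) := by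
          apply ContinuousOn.inv₀ (continuous_const.mul continuous_id).continuousOn
          intro t ht
          have ht0 : 0 < t := lt_of_lt_of_le hx0 ht.1
          exact mul_ne_zero hc'0.ne' ht0.ne'
        exact hco.integrableOn_Icc.mono_set Ioc_subset_Icc_self
      · exact (hfi x y hx0.le).mono_set Ioc_subset_Icc_self
      · exact measurableSet_Ioc
      · intro t ht
        have ht0 : 0 < t := hx0.trans ht.1
        have htz : z₀ < t := hx.trans ht.1
        have hgt : 0 < g t := hgpos' t ht0
        have hub := hgub t htz
        have h5 : (c' * t)⁻¹ = t / (c' * t ^ 2) := by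
          field_simp
        rw [h5]
        simp only [hfdef]
        exact div_le_div_of_nonneg_left ht0.le hgt hub
    have hinv : ∫ t in Ioc x y, (c' * t)⁻¹ ∂volume = Real.log L := by
      rw [← intervalIntegral.integral_of_le hxy.le]
      have hsplit : ∀ t : ℝ, (c' * t)⁻¹ = c'⁻¹ * t⁻¹ := fun t => by rw [mul_inv]
      simp_rw [hsplit]
      rw [intervalIntegral.integral_const_mul, integral_inv
        (by rw [uIcc_of_le hxy.le]; exact fun h => absurd h.1 (not_le.mpr hx0))]
      have hxne : x ≠ 0 := ne_of_gt hx0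
      rw [hydef, mul_div_assoc, div_self hxne, mul_one, hlamdef, Real.log_rpow hL0]
      rw [inv_mul_cancel_left₀ (ne_of_gt hc'0)]
    have hFyxeq : F y - F x = ∫ t in Ioc x y, f t ∂volume := (hFIoc x y hx0.le hxy.le).symm
    rw [hFyxeq, ← hinv]
    exact hcompare
  have hAy : A y ≤ A x * (c' / (1 + c')) := by
    have h1 : A y = A x * Real.exp (-(F y - F x)) := by
      rw [hAF y, hAF x, ← Real.exp_add]
      congr 1
      ring
    have h3 : Real.exp (-Real.log L) = c' / (1 + c') := by
      rw [Real.exp_neg, Real.exp_log hL0, hLdef, inv_div]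
    rw [h1, ← h3]
    exact mul_le_mul_of_nonneg_left (Real.exp_le_exp.mpr (neg_le_neg hFyx)) (hA0 x).le
  have hAxy : A x / (1 + c') ≤ A x - A y := by
    have h1 : A x - A x * (c' / (1 + c')) = A x / (1 + c') := by
      field_simp
      ring
    linarith
  -- lower bound on A x
  set D : ℝ := (2 - p) * c₁ with hDdef
  have hD0 : 0 < D := mul_pos (by linarith) hc₁
  have hFxz : F x - F z₀ ≤ x ^ (2 - p) / D := by
    have hrint : IntegrableOn (fun t : ℝ => t ^ (1 - p) / c₁) (Ioc z₀ x) volume := by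
      have hco : ContinuousOn (fun t : ℝ => t ^ (1 - p) / c₁) (Icc z₀ x) := by
        apply ContinuousOn.div_const
        intro t ht
        exact (Real.continuousAt_rpow_const t _
          (Or.inl (ne_of_gt (lt_of_lt_of_le hz0 ht.1)))).continuousWithinAt
      exact hco.integrableOn_Icc.mono_set Ioc_subset_Icc_self
    have hcompare : ∫ t in Ioc z₀ x, f t ∂volume
        ≤ ∫ t in Ioc z₀ x, t ^ (1 - p) / c₁ ∂volume := by
      apply setIntegral_mono_on
      · exact (hfi z₀ x hz0.le).mono_set Ioc_subset_Icc_self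
      · exact hrint
      · exact measurableSet_Ioc
      · intro t ht
        have htz : z₀ < t := ht.1
        have ht0 : 0 < t := hz0.trans htz
        have hlb := hglb t htz
        have htp : (0:ℝ) < t ^ p := Real.rpow_pos_of_pos ht0 _
        have hgt : 0 < g t := hgpos' t ht0
        have h5 : t / (c₁ * t ^ p) = t ^ (1 - p) / c₁ := by
          rw [Real.rpow_sub ht0, Real.rpow_one, div_mul_eq_div_div, div_right_comm]
        have h6 : f t ≤ t / (c₁ * t ^ p) := by
          simp only [hfdef]
          exact div_le_div_of_nonneg_left ht0.le (mul_pos hc₁ htp) hlb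
        rw [← h5]
        exact h6
    have hrval : ∫ t in Ioc z₀ x, t ^ (1 - p) / c₁ ∂volume
        = (x ^ (2 - p) - z₀ ^ (2 - p)) / D := by
      rw [← intervalIntegral.integral_of_le hx.le]
      simp_rw [div_eq_mul_inv]
      rw [intervalIntegral.integral_mul_const,
        integral_rpow (Or.inl (by linarith : (-1:ℝ) < 1 - p))]
      have h9 : 1 - p + 1 = 2 - p := by ring
      rw [h9, hDdef]
      have hne : (2:ℝ) - p ≠ 0 := by linarith
      field_simp
    have h6 : F x - F z₀ = ∫ t in Ioc z₀ x, f t ∂volume := (hFIoc z₀ x hz0.le hx.le).symm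
    have h7 : (x ^ (2 - p) - z₀ ^ (2 - p)) / D ≤ x ^ (2 - p) / D := by
      apply div_le_div_of_nonneg_right ?_ hD0.le
      exact sub_le_self _ (Real.rpow_nonneg hz0.le _)
    rw [h6]
    calc ∫ t in Ioc z₀ x, f t ∂volume ≤ ∫ t in Ioc z₀ x, t ^ (1 - p) / c₁ ∂volume := hcompare
      _ = (x ^ (2 - p) - z₀ ^ (2 - p)) / D := hrval
      _ ≤ x ^ (2 - p) / D := h7
  have hAx : A z₀ * E ≤ A x := by
    have h1 : A x = A z₀ * Real.exp (-(F x - F z₀)) := by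
      rw [hAF x, hAF z₀, ← Real.exp_add]
      congr 1
      ring
    rw [h1, hEdef]
    apply mul_le_mul_of_nonneg_left _ (hA0 z₀).le
    apply Real.exp_le_exp.mpr
    rw [neg_div]
    exact neg_le_neg hFxz
  -- final assembly
  have hlam0 : 0 < lam := Real.rpow_pos_of_pos hL0 _
  have hc'pow : (0:ℝ) < c' ^ c' := Real.rpow_pos_of_pos hc'0 _
  have h1cpow : (0:ℝ) < (1 + c') ^ (1 + c') := Real.rpow_pos_of_pos h1c'0 _
  have hlameq : lam * (1 + c') = (1 + c') ^ (1 + c') / c' ^ c' := by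
    rw [hlamdef, hLdef, Real.div_rpow h1c'0.le hc'0.le, div_mul_eq_mul_div]
    congr 1
    rw [← Real.rpow_add_one (ne_of_gt h1c'0) c']
    congr 1
    ring
  have hcoef : c' ^ c' / (1 + c') ^ (1 + c') * x⁻¹ = (y * (1 + c'))⁻¹ := by
    rw [hydef, show lam * x * (1 + c') = lam * (1 + c') * x by ring, hlameq]
    have hx' : x ≠ 0 := ne_of_gt hx0
    have h1 : (1 + c') ^ (1 + c') ≠ 0 := ne_of_gt h1cpow
    have h2 : c' ^ c' ≠ 0 := ne_of_gt hc'pow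
    field_simp
  have hfinal : M * (c' ^ c' / (1 + c') ^ (1 + c')) * A z₀ * (x⁻¹ * E) ≤ C := by
    have hkey2 : C = M / y * (A x - A y) := by rw [hCdef, hAF x, hAF y]
    rw [hkey2]
    have step1 : M / y * (A z₀ * E / (1 + c')) ≤ M / y * (A x - A y) := by
      apply mul_le_mul_of_nonneg_left _ (div_nonneg hM0 hy0.le)
      calc A z₀ * E / (1 + c')
          = A z₀ * E * (1 + c')⁻¹ := div_eq_mul_inv _ _
        _ ≤ A x * (1 + c')⁻¹ := mul_le_mul_of_nonneg_right hAx (inv_nonneg.mpr h1c'0.le)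
        _ = A x / (1 + c') := (div_eq_mul_inv _ _).symm
        _ ≤ A x - A y := hAxy
    have heq2 : M * (c' ^ c' / (1 + c') ^ (1 + c')) * A z₀ * (x⁻¹ * E)
        = M / y * (A z₀ * E / (1 + c')) := by
      calc M * (c' ^ c' / (1 + c') ^ (1 + c')) * A z₀ * (x⁻¹ * E)
          = M * A z₀ * E * (c' ^ c' / (1 + c') ^ (1 + c') * x⁻¹) := by ring
        _ = M * A z₀ * E * (y * (1 + c'))⁻¹ := by rw [hcoef]
        _ = M / y * (A z₀ * E / (1 + c')) := by
            rw [mul_inv]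
            simp only [div_eq_mul_inv]
            ring
    rw [heq2]
    exact step1
  exact hfinal.trans hCreal
end

section
/- In the density-representation setting, with z₀ > 1: (i) if g(x) ≤ c″ x² for all x > z₀ with some c″ > 0, then there is a constant C > 0 (one may take C = (E|X|/2) · A(z₀) · z₀^{1/c″}) such that P[X > x] ≤ C · x^{−1−1/c″} for all x > z₀; (ii) if g(x) ≤ c₁ x^p for all x > z₀ with some c₁ > 0 and p < 2, then there is a constant C′ > 0 (one may take C′ = (E|X|/2) · A(z₀) · exp(z₀^{2−p}/((2−p)c₁))) such that P[X > x] ≤ C′ · x^{−1} · exp(−x^{2−p}/((2−p) c₁)) for all x > z₀. -/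
open MeasureTheory Set Filter Real
open scoped ENNReal NNReal


lemma lint_exp_tail (t : ℝ) :
    ∫⁻ u in Set.Ioi t, ENNReal.ofReal (Real.exp (-u)) = ENNReal.ofReal (Real.exp (-t)) := by
  have hi : IntegrableOn (fun u : ℝ => Real.exp (-u)) (Set.Ioi t) := by
    simpa [neg_one_mul] using exp_neg_integrableOn_Ioi t one_pos
  rw [← integral_exp_neg_Ioi t,
    ofReal_integral_eq_lintegral_ofReal hi (ae_of_all _ fun u => (Real.exp_pos (-u)).le)]

lemma lint_exp_mul_tail (c : ℝ) :
    ∫⁻ u, ENNReal.ofReal (Real.exp (-u)) * ENNReal.ofReal (u - c) =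
      ENNReal.ofReal (Real.exp (-c)) := by
  set G : ℝ → ℝ := fun u => -((u - c + 1) * Real.exp (-u)) with hG
  have hderiv : ∀ u ∈ Set.Ioi c, HasDerivAt G (Real.exp (-u) * (u - c)) u := by
    intro u _
    have h1 : HasDerivAt (fun u : ℝ => u - c + 1) 1 u :=
      ((hasDerivAt_id u).sub_const c).add_const 1
    have h2 : HasDerivAt (fun u : ℝ => Real.exp (-u)) (-Real.exp (-u)) u := by
      simpa [Function.comp_def] using (Real.hasDerivAt_exp (-u)).comp u (hasDerivAt_neg u)
    have h3 := (h1.mul h2).neg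
    exact h3.congr_deriv (by ring)
  have hpos : ∀ u ∈ Set.Ioi c, 0 ≤ Real.exp (-u) * (u - c) := fun u hu =>
    mul_nonneg (Real.exp_pos _).le (by simpa using sub_nonneg.2 (le_of_lt (Set.mem_Ioi.mp hu)))
  have hcont : ContinuousWithinAt G (Set.Ici c) c := by
    have : Continuous G := by continuity
    exact this.continuousWithinAt
  have htend : Tendsto G atTop (nhds 0) := by
    have h1 : Tendsto (fun u : ℝ => u * Real.exp (-u)) atTop (nhds 0) := by
      simpa using tendsto_pow_mul_exp_neg_atTop_nhds_zero 1
    have h2 : Tendsto (fun u : ℝ => Real.exp (-u)) atTop (nhds 0) :=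
      Real.tendsto_exp_neg_atTop_nhds_zero
    have h3 := (h1.add (h2.const_mul (1 - c))).neg
    have heq : G = fun u : ℝ => -(u * Real.exp (-u) + (1 - c) * Real.exp (-u)) := by
      funext u; rw [hG]; ring
    rw [heq]
    simpa using h3
  have hint : ∫ u in Set.Ioi c, Real.exp (-u) * (u - c) = Real.exp (-c) := by
    have h := integral_Ioi_of_hasDerivAt_of_nonneg hcont hderiv hpos htend
    rw [h, hG]
    simp
  have hL : IntegrableOn (fun u => Real.exp (-u) * (u - c)) (Set.Ioi c) :=
    integrableOn_Ioi_deriv_of_nonneg hcont hderiv hpos htend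
  rw [← lintegral_add_compl (fun u => ENNReal.ofReal (Real.exp (-u)) * ENNReal.ofReal (u - c))
    measurableSet_Ioi (μ := volume)]
  have hzero : ∫⁻ u in (Set.Ioi c)ᶜ,
      ENNReal.ofReal (Real.exp (-u)) * ENNReal.ofReal (u - c) = 0 := by
    rw [compl_Ioi]
    rw [setLIntegral_congr_fun measurableSet_Iic (fun u hu => ?_), lintegral_zero]
    rw [ENNReal.ofReal_eq_zero.2 (sub_nonpos.2 hu), mul_zero]
  have hmain : ∫⁻ u in Set.Ioi c,
      ENNReal.ofReal (Real.exp (-u)) * ENNReal.ofReal (u - c) =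
      ENNReal.ofReal (Real.exp (-c)) := by
    rw [setLIntegral_congr_fun measurableSet_Ioi
      (fun u (hu : u ∈ Set.Ioi c) =>
        (ENNReal.ofReal_mul (Real.exp_pos (-u)).le).symm),
      ← ofReal_integral_eq_lintegral_ofReal hL
      (ae_restrict_of_ae_restrict_of_subset subset_rfl
        ((ae_restrict_iff' measurableSet_Ioi).2 (ae_of_all _ fun u hu => hpos u hu))), hint]
  rw [hmain, hzero, add_zero]

lemma core_tail (f : ℝ → ℝ) (hfm : Measurable f) (hf0 : ∀ y, 0 ≤ f y)
    (x : ℝ) (F : ℝ → ℝ)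
    (hFi : ∀ u v : ℝ, x ≤ u → u ≤ v → F v - F u = ∫ y in u..v, f y)
    (hint : ∀ T, IntegrableOn f (Set.Icc x T) volume) :
    ∫⁻ y in Set.Ioi x, ENNReal.ofReal (f y * Real.exp (-F y)) ≤
      ENNReal.ofReal (Real.exp (-F x)) := by
  have hmono : ∀ u v : ℝ, x ≤ u → u ≤ v → F u ≤ F v := by
    intro u v hu huv
    have h := hFi u v hu huv
    have h2 : 0 ≤ ∫ y in u..v, f y :=
      intervalIntegral.integral_nonneg huv fun y _ => hf0 y
    linarith
  set Fm : ℝ → ℝ := fun y => F (max x y) with hFmdef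
  have hFmmono : Monotone Fm := fun u v huv =>
    hmono _ _ (le_max_left _ _) (max_le_max le_rfl huv)
  have hFmm : Measurable Fm := hFmmono.measurable
  have hFmx : ∀ y : ℝ, x ≤ y → Fm y = F y := fun y hy => by
    rw [hFmdef]; simp [max_eq_right hy]
  -- the density measure
  set ν := volume.withDensity (fun y => ENNReal.ofReal (f y)) with hν
  have hνIoc : ∀ T : ℝ, x ≤ T → ν (Set.Ioc x T) = ENNReal.ofReal (F T - F x) := by
    intro T hT
    rw [hν, withDensity_apply _ measurableSet_Ioc, hFi x T le_rfl hT,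
      intervalIntegral.integral_of_le hT,
      ofReal_integral_eq_lintegral_ofReal
        ((hint T).mono_set Set.Ioc_subset_Icc_self) (ae_of_all _ fun y => hf0 y)]
  have claim : ∀ u : ℝ, ν {y | x < y ∧ F y < u} ≤ ENNReal.ofReal (u - F x) := by
    intro u
    set S := {y | x < y ∧ F y < u} with hS
    rcases Set.eq_empty_or_nonempty S with hSe | hSne
    · simp [hSe]
    have key : ∃ t : ℕ → ℝ, (∀ n, t n ∈ S) ∧ S ⊆ ⋃ n, Set.Ioc x (t n) := by
      by_cases hbdd : BddAbove S
      · set s := sSup S with hs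
        by_cases hsS : s ∈ S
        · exact ⟨fun _ => s, fun _ => hsS,
            fun y hy => Set.mem_iUnion.2 ⟨0, hy.1, le_csSup hbdd hy⟩⟩
        · have hpick : ∀ n : ℕ, ∃ y ∈ S, s - 1 / (n + 1) < y := fun n =>
            exists_lt_of_lt_csSup hSne (by
              have : (0:ℝ) < 1 / (n + 1) := by positivity
              linarith)
          choose t ht hts using hpick
          refine ⟨t, ht, fun y hy => ?_⟩
          have hys : y < s := lt_of_le_of_ne (le_csSup hbdd hy) fun h => hsS (h ▸ hy)
          obtain ⟨n, hn⟩ := exists_nat_one_div_lt (sub_pos.2 hys)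
          refine Set.mem_iUnion.2 ⟨n, hy.1, ?_⟩
          have := hts n
          linarith
      · have hpick : ∀ n : ℕ, ∃ y ∈ S, (n : ℝ) < y := by
          intro n
          by_contra h
          push_neg at h
          exact hbdd ⟨n, fun y hy => h y hy⟩
        choose t ht hts using hpick
        refine ⟨t, ht, fun y hy => ?_⟩
        exact Set.mem_iUnion.2 ⟨⌈y⌉₊, hy.1, ((Nat.le_ceil y).trans (hts ⌈y⌉₊).le)⟩
    obtain ⟨t, htS, hcov⟩ := key
    have hdir : Directed (· ⊆ ·) fun n => Set.Ioc x (t n) := fun m n => by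
      rcases le_total (t m) (t n) with h | h
      · exact ⟨n, Set.Ioc_subset_Ioc_right h, subset_rfl⟩
      · exact ⟨m, subset_rfl, Set.Ioc_subset_Ioc_right h⟩
    calc ν S ≤ ν (⋃ n, Set.Ioc x (t n)) := measure_mono hcov
      _ = ⨆ n, ν (Set.Ioc x (t n)) := hdir.measure_iUnion
      _ ≤ ENNReal.ofReal (u - F x) := by
          refine iSup_le fun n => ?_
          rw [hνIoc (t n) (htS n).1.le]
          exact ENNReal.ofReal_le_ofReal (by have := (htS n).2; linarith)
  -- the double integral
  set H : ℝ × ℝ → ℝ≥0∞ := fun p =>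
    Set.indicator {p : ℝ × ℝ | Fm p.1 < p.2}
      (fun p => ENNReal.ofReal (f p.1) * ENNReal.ofReal (Real.exp (-p.2))) p with hHdef
  have hHset : MeasurableSet {p : ℝ × ℝ | Fm p.1 < p.2} :=
    measurableSet_lt (hFmm.comp measurable_fst) measurable_snd
  have hHm : Measurable H :=
    (((hfm.comp measurable_fst).ennreal_ofReal).mul
      ((Real.measurable_exp.comp measurable_snd.neg).ennreal_ofReal)).indicator hHset
  calc ∫⁻ y in Set.Ioi x, ENNReal.ofReal (f y * Real.exp (-F y))
      = ∫⁻ y in Set.Ioi x, ∫⁻ u, H (y, u) := by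
        refine setLIntegral_congr_fun measurableSet_Ioi (fun y hy => ?_)
        have h0 : ∀ u : ℝ, H (y, u) =
            (Set.Ioi (Fm y)).indicator
              (fun u => ENNReal.ofReal (f y) * ENNReal.ofReal (Real.exp (-u))) u := by
          intro u
          by_cases h : Fm y < u <;>
            simp [hHdef, Set.indicator, h, Set.mem_Ioi, Set.mem_setOf_eq]
        simp_rw [h0]
        rw [lintegral_indicator measurableSet_Ioi,
          lintegral_const_mul' _ _ ENNReal.ofReal_ne_top, lint_exp_tail,
          hFmx y (le_of_lt hy), ← ENNReal.ofReal_mul (hf0 y)]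
    _ = ∫⁻ u, ∫⁻ y in Set.Ioi x, H (y, u) :=
        lintegral_lintegral_swap hHm.aemeasurable
    _ ≤ ∫⁻ u, ENNReal.ofReal (Real.exp (-u)) * ENNReal.ofReal (u - F x) := by
        refine lintegral_mono fun u => ?_
        have hmsu : MeasurableSet {y : ℝ | Fm y < u} :=
          measurableSet_lt hFmm measurable_const
        have hseteq : {y : ℝ | Fm y < u} ∩ Set.Ioi x = {y | x < y ∧ F y < u} := by
          ext y
          simp only [Set.mem_setOf_eq, Set.mem_inter_iff, Set.mem_Ioi]
          constructor
          · rintro ⟨h2, h1⟩; exact ⟨h1, by rw [← hFmx y h1.le]; exact h2⟩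
          · rintro ⟨h1, h2⟩; exact ⟨by rw [hFmx y h1.le]; exact h2, h1⟩
        have h1 : ∫⁻ y in Set.Ioi x, H (y, u) =
            ∫⁻ y in {y : ℝ | Fm y < u} ∩ Set.Ioi x,
              ENNReal.ofReal (f y) * ENNReal.ofReal (Real.exp (-u)) := by
          have h0 : ∀ y : ℝ, H (y, u) =
              Set.indicator {y : ℝ | Fm y < u}
                (fun y => ENNReal.ofReal (f y) * ENNReal.ofReal (Real.exp (-u))) y := by
            intro y
            by_cases h : Fm y < u <;>
              simp [hHdef, Set.indicator, h, Set.mem_setOf_eq]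
          simp_rw [h0]
          rw [lintegral_indicator hmsu, Measure.restrict_restrict hmsu]
        rw [h1, hseteq, lintegral_mul_const' _ _ ENNReal.ofReal_ne_top,
          ← withDensity_apply _ (by rw [← hseteq]; exact hmsu.inter measurableSet_Ioi)]
        rw [mul_comm]
        exact mul_le_mul_right (claim u) _
    _ = ENNReal.ofReal (Real.exp (-F x)) := lint_exp_mul_tail (F x)

/-- **Density-representation setting** (Nourdin–Viens): `X` is a centered integrable random
variable whose law has Lebesgue density `ρ`, positive on `(a, ∞)` (with `−∞ ≤ a < 0`) and
vanishing outside; `g > 0` on `(a, ∞)` with `y ↦ y/g(y)` locally integrable there;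
`A(x) = exp(−∫_0^x y/g(y) dy)`; and `ρ(x) = (E|X|/2) A(x)/g(x)` a.e. on `(a, ∞)`. -/
theorem tail_upper_bounds_reversed {Ω : Type*} {mΩ : MeasurableSpace Ω} (μ : Measure Ω)
    [IsProbabilityMeasure μ] (X : Ω → ℝ) (hXm : Measurable X)
    (hXint : Integrable X μ) (hcen : ∫ ω, X ω ∂μ = 0)
    (ρ g : ℝ → ℝ) (a : EReal) (ha : a < 0)
    (hmap : Measure.map X μ = volume.withDensity fun x => ENNReal.ofReal (ρ x))
    (hρpos : ∀ x : ℝ, a < (x : EReal) → 0 < ρ x)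
    (hρzero : ∀ x : ℝ, (x : EReal) ≤ a → ρ x = 0)
    (hgpos : ∀ x : ℝ, a < (x : EReal) → 0 < g x)
    (hloc : ∀ u v : ℝ, a < (u : EReal) → IntegrableOn (fun y => y / g y) (Set.Icc u v) volume)
    (A : ℝ → ℝ) (hA : ∀ x : ℝ, A x = Real.exp (-∫ y in (0 : ℝ)..x, y / g y))
    (hρA : ∀ᵐ x : ℝ ∂volume, a < (x : EReal) →
      ρ x = (∫ ω, |X ω| ∂μ) / 2 * A x / g x)
    (z₀ : ℝ) (hz₀ : 1 < z₀) :
    (∀ c'' : ℝ, 0 < c'' → (∀ x : ℝ, z₀ < x → g x ≤ c'' * x ^ 2) →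
      ∀ x : ℝ, z₀ < x →
        (μ {ω | x < X ω}).toReal ≤
          ((∫ ω, |X ω| ∂μ) / 2 * A z₀ * z₀ ^ (1 / c'')) * x ^ (-1 - 1 / c'')) ∧
    (∀ c₁ p : ℝ, 0 < c₁ → p < 2 → (∀ x : ℝ, z₀ < x → g x ≤ c₁ * x ^ p) →
      ∀ x : ℝ, z₀ < x →
        (μ {ω | x < X ω}).toReal ≤
          ((∫ ω, |X ω| ∂μ) / 2 * A z₀ * Real.exp (z₀ ^ (2 - p) / ((2 - p) * c₁))) *
            (x⁻¹ * Real.exp (-(x ^ (2 - p)) / ((2 - p) * c₁)))) := by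
  set M : ℝ := (∫ ω, |X ω| ∂μ) / 2 with hM
  have hM0 : 0 ≤ M := div_nonneg (integral_nonneg fun ω => abs_nonneg _) two_pos.le
  set f₀ : ℝ → ℝ := fun y => y / g y with hf₀
  set F : ℝ → ℝ := fun y => ∫ t in (0 : ℝ)..y, f₀ t with hF
  have hAF : ∀ y : ℝ, A y = Real.exp (-F y) := fun y => hA y
  have haE : ∀ y : ℝ, 0 ≤ y → a < (y : EReal) := by
    intro y hy
    refine ha.trans_le ?_
    exact_mod_cast hy
  have hz0 : (0 : ℝ) < z₀ := by linarith
  -- interval integrability of f₀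
  have hII : ∀ u v : ℝ, 0 ≤ u → 0 ≤ v → IntervalIntegrable f₀ volume u v := by
    intro u v hu hv
    apply MeasureTheory.IntegrableOn.intervalIntegrable
    have h := hloc (min u v) (max u v) (haE _ (le_min hu hv))
    simpa [Set.uIcc] using h
  have hFdiff : ∀ u v : ℝ, 0 ≤ u → u ≤ v → F v - F u = ∫ y in u..v, f₀ y := by
    intro u v hu huv
    have h1 := intervalIntegral.integral_add_adjacent_intervals
      (hII 0 u le_rfl hu) (hII u v hu (hu.trans huv))
    simp only [hF]
    linarith
  -- measurable nonneg version of f₀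
  have haesm : AEStronglyMeasurable f₀ (volume.restrict (Set.Ioi (0 : ℝ))) := by
    have hsub : Set.Ioi (0 : ℝ) ⊆ ⋃ n : ℕ, Set.Icc (0 : ℝ) n := fun y hy =>
      Set.mem_iUnion.2 ⟨⌈y⌉₊, hy.le, Nat.le_ceil y⟩
    have h1 : AEStronglyMeasurable f₀ (volume.restrict (⋃ n : ℕ, Set.Icc (0 : ℝ) n)) := by
      rw [aestronglyMeasurable_iUnion_iff]
      exact fun n => (hloc 0 n (haE 0 le_rfl)).1
    exact h1.mono_measure (Measure.restrict_mono hsub le_rfl)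
  have haem : AEMeasurable f₀ (volume.restrict (Set.Ioi (0 : ℝ))) := haesm.aemeasurable
  set f : ℝ → ℝ := fun y => max (haem.mk f₀ y) 0 with hfdef
  have hfm : Measurable f := haem.measurable_mk.max measurable_const
  have hf0 : ∀ y, 0 ≤ f y := fun y => le_max_right _ _
  have hfeq : f =ᵐ[volume.restrict (Set.Ioi (0 : ℝ))] f₀ := by
    filter_upwards [haem.ae_eq_mk, ae_restrict_mem measurableSet_Ioi] with y hy hymem
    rw [hfdef]
    simp only
    rw [← hy, max_eq_left]
    exact le_of_lt (div_pos hymem (hgpos y (haE y hymem.le)))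
  have hfeq' : ∀ᵐ y ∂volume, y ∈ Set.Ioi (0:ℝ) → f y = f₀ y :=
    (ae_restrict_iff' measurableSet_Ioi).1 hfeq
  -- key tail estimate
  have hkey : ∀ x : ℝ, 0 < x →
      μ {ω | x < X ω} ≤ ENNReal.ofReal (M * Real.exp (-F x) / x) := by
    intro x hx
    have hpre : {ω | x < X ω} = X ⁻¹' Set.Ioi x := rfl
    rw [hpre, ← Measure.map_apply hXm measurableSet_Ioi, hmap,
      withDensity_apply _ measurableSet_Ioi]
    have hae : ∀ᵐ y ∂volume.restrict (Set.Ioi x),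
        ENNReal.ofReal (ρ y) ≤
          ENNReal.ofReal (M / x) * ENNReal.ofReal (f₀ y * Real.exp (-F y)) := by
      filter_upwards [ae_restrict_of_ae hρA, ae_restrict_mem measurableSet_Ioi]
        with y hy hymem
      have hy0 : 0 < y := hx.trans hymem
      have hga : 0 < g y := hgpos y (haE y hy0.le)
      have hρy : ρ y = M * Real.exp (-F y) / g y := by
        rw [hy (haE y hy0.le), hAF y, hM]
      rw [hρy, ← ENNReal.ofReal_mul (div_nonneg hM0 hx.le)]
      apply ENNReal.ofReal_le_ofReal
      have hE : (0 : ℝ) < Real.exp (-F y) := Real.exp_pos _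
      have heq : M / x * (f₀ y * Real.exp (-F y)) =
          M * Real.exp (-F y) / g y * (y / x) := by
        rw [hf₀]
        field_simp
      rw [heq]
      nth_rewrite 1 [← mul_one (M * Real.exp (-F y) / g y)]
      exact mul_le_mul_of_nonneg_left ((one_le_div hx).mpr hymem.le) (by positivity)
    calc ∫⁻ y in Set.Ioi x, ENNReal.ofReal (ρ y)
        ≤ ∫⁻ y in Set.Ioi x,
            ENNReal.ofReal (M / x) * ENNReal.ofReal (f₀ y * Real.exp (-F y)) :=
          lintegral_mono_ae hae
      _ = ENNReal.ofReal (M / x) *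
            ∫⁻ y in Set.Ioi x, ENNReal.ofReal (f₀ y * Real.exp (-F y)) :=
          lintegral_const_mul' _ _ ENNReal.ofReal_ne_top
      _ = ENNReal.ofReal (M / x) *
            ∫⁻ y in Set.Ioi x, ENNReal.ofReal (f y * Real.exp (-F y)) := by
          congr 1
          apply lintegral_congr_ae
          have h2 : f =ᵐ[volume.restrict (Set.Ioi x)] f₀ :=
            ae_restrict_of_ae_restrict_of_subset (Set.Ioi_subset_Ioi hx.le) hfeq
          filter_upwards [h2] with y hy
          rw [hy]
      _ ≤ ENNReal.ofReal (M / x) * ENNReal.ofReal (Real.exp (-F x)) := by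
          apply mul_le_mul_right
          apply core_tail f hfm hf0 x F
          · intro u v hu huv
            rw [hFdiff u v (hx.le.trans hu) huv]
            apply intervalIntegral.integral_congr_ae
            filter_upwards [hfeq'] with y hy hymem
            have : y ∈ Set.Ioi (0 : ℝ) := by
              rcases Set.mem_uIoc.1 hymem with h | h
              · exact lt_of_lt_of_le (lt_of_lt_of_le hx hu) h.1.le |>.trans_le le_rfl |> fun hh => hh
              · exact lt_of_lt_of_le (lt_of_lt_of_le hx (hu.trans huv)) h.1.le |> fun hh => hh
            rw [hy this]
          · intro T
            rcases le_or_gt x T with h | h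
            · have hss : Set.Icc x T ⊆ Set.Ioi (0 : ℝ) := fun y hy => hx.trans_le hy.1
              exact (hloc x T (haE x hx.le)).congr
                (Filter.EventuallyEq.symm (ae_restrict_of_ae_restrict_of_subset hss hfeq))
            · rw [Set.Icc_eq_empty (not_le.mpr h)]
              exact integrableOn_empty
      _ = ENNReal.ofReal (M * Real.exp (-F x) / x) := by
          rw [← ENNReal.ofReal_mul (div_nonneg hM0 hx.le)]
          ring_nf
  have htoReal : ∀ x : ℝ, 0 < x →
      (μ {ω | x < X ω}).toReal ≤ M * Real.exp (-F x) / x := by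
    intro x hx
    have h2 := ENNReal.toReal_mono ENNReal.ofReal_ne_top (hkey x hx)
    rwa [ENNReal.toReal_ofReal (by positivity)] at h2
  have hane : ∀ᵐ (y : ℝ) ∂volume, y ∉ ({z₀} : Set ℝ) :=
    measure_eq_zero_iff_ae_notMem.1 (measure_singleton z₀)
  constructor
  · -- part (i)
    intro c'' hc'' hg'' x hx
    have hx0 : (0 : ℝ) < x := hz0.trans hx
    refine (htoReal x hx0).trans ?_
    -- comparison of integrals
    have hcomp : ∫ y in z₀..x, c''⁻¹ * y⁻¹ ≤ ∫ y in z₀..x, f₀ y := by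
      apply intervalIntegral.integral_mono_ae_restrict hx.le
      · apply ContinuousOn.intervalIntegrable
        apply ContinuousOn.mul continuousOn_const
        apply ContinuousOn.inv₀ continuousOn_id
        intro y hy
        rw [Set.uIcc_of_le hx.le] at hy
        exact ne_of_gt (hz0.trans_le hy.1)
      · exact hII z₀ x hz0.le hx0.le
      · filter_upwards [ae_restrict_mem measurableSet_Icc, ae_restrict_of_ae hane]
          with y hyIcc hyne
        have hyz : z₀ < y := lt_of_le_of_ne hyIcc.1 (Ne.symm hyne)
        have hy0 : (0 : ℝ) < y := hz0.trans hyz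
        have hgy : 0 < g y := hgpos y (haE y hy0.le)
        have hb := hg'' y hyz
        have h1 : c''⁻¹ * y⁻¹ = y / (c'' * y ^ 2) := by
          field_simp
        rw [hf₀, h1]
        exact div_le_div_of_nonneg_left hy0.le hgy hb
    have hlog : ∫ y in z₀..x, c''⁻¹ * y⁻¹ = c''⁻¹ * Real.log (x / z₀) := by
      rw [intervalIntegral.integral_const_mul, integral_inv_of_pos hz0 hx0]
    have hFge : F z₀ + c''⁻¹ * Real.log (x / z₀) ≤ F x := by
      have := hFdiff z₀ x hz0.le hx.le
      linarith
    have hexp : Real.exp (-F x) ≤ A z₀ * (x / z₀) ^ (-(c''⁻¹)) := by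
      rw [hAF z₀]
      have hrw : (x / z₀ : ℝ) ^ (-(c''⁻¹)) =
          Real.exp (-(c''⁻¹ * Real.log (x / z₀))) := by
        rw [Real.rpow_def_of_pos (by positivity)]
        congr 1
        ring
      rw [hrw, ← Real.exp_add]
      exact Real.exp_le_exp.mpr (by linarith)
    have hrhs : M * A z₀ * z₀ ^ (1 / c'') * x ^ (-1 - 1 / c'') =
        M * (A z₀ * (x / z₀) ^ (-(c''⁻¹))) / x := by
      rw [Real.rpow_neg (by positivity), Real.div_rpow hx0.le hz0.le,
        show (-1 - 1 / c'' : ℝ) = -1 + -(1 / c'') by ring,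
        Real.rpow_add hx0, Real.rpow_neg_one, Real.rpow_neg hx0.le, one_div]
      have hxne : x ^ (c''⁻¹ : ℝ) ≠ 0 := ne_of_gt (Real.rpow_pos_of_pos hx0 _)
      have hzne : z₀ ^ (c''⁻¹ : ℝ) ≠ 0 := ne_of_gt (Real.rpow_pos_of_pos hz0 _)
      field_simp
    rw [hrhs]
    gcongr
  · -- part (ii)
    intro c₁ p hc₁ hp hg₁ x hx
    have hx0 : (0 : ℝ) < x := hz0.trans hx
    have hq : (0 : ℝ) < 2 - p := by linarith
    refine (htoReal x hx0).trans ?_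
    have hcomp : ∫ y in z₀..x, c₁⁻¹ * y ^ (1 - p) ≤ ∫ y in z₀..x, f₀ y := by
      apply intervalIntegral.integral_mono_ae_restrict hx.le
      · apply ContinuousOn.intervalIntegrable
        apply ContinuousOn.mul continuousOn_const
        intro y hy
        rw [Set.uIcc_of_le hx.le] at hy
        exact (Real.continuousAt_rpow_const y (1 - p)
          (Or.inl (ne_of_gt (hz0.trans_le hy.1)))).continuousWithinAt
      · exact hII z₀ x hz0.le hx0.le
      · filter_upwards [ae_restrict_mem measurableSet_Icc, ae_restrict_of_ae hane]
          with y hyIcc hyne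
        have hyz : z₀ < y := lt_of_le_of_ne hyIcc.1 (Ne.symm hyne)
        have hy0 : (0 : ℝ) < y := hz0.trans hyz
        have hgy : 0 < g y := hgpos y (haE y hy0.le)
        have hb := hg₁ y hyz
        have hyp : (0 : ℝ) < y ^ (p : ℝ) := Real.rpow_pos_of_pos hy0 _
        have h1 : c₁⁻¹ * y ^ (1 - p) = y / (c₁ * y ^ (p : ℝ)) := by
          rw [show (1 - p : ℝ) = 1 - p from rfl, Real.rpow_sub hy0, Real.rpow_one]
          field_simp
        rw [hf₀, h1]
        exact div_le_div_of_nonneg_left hy0.le hgy hb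
    have hval : ∫ y in z₀..x, c₁⁻¹ * y ^ (1 - p) =
        x ^ (2 - p) / ((2 - p) * c₁) - z₀ ^ (2 - p) / ((2 - p) * c₁) := by
      rw [intervalIntegral.integral_const_mul, integral_rpow (Or.inl (by linarith)),
        show (1 - p + 1 : ℝ) = 2 - p by ring, ← sub_div, mul_comm, ← div_eq_mul_inv,
        div_div]
    have hFge : F z₀ + (x ^ (2 - p) / ((2 - p) * c₁) - z₀ ^ (2 - p) / ((2 - p) * c₁)) ≤ F x := by
      have := hFdiff z₀ x hz0.le hx.le
      linarith
    have hexp : Real.exp (-F x) ≤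
        A z₀ * Real.exp (z₀ ^ (2 - p) / ((2 - p) * c₁)) *
          Real.exp (-(x ^ (2 - p)) / ((2 - p) * c₁)) := by
      rw [hAF z₀, ← Real.exp_add, ← Real.exp_add]
      apply Real.exp_le_exp.mpr
      have h2 : -(x ^ (2 - p)) / ((2 - p) * c₁) = -(x ^ (2 - p) / ((2 - p) * c₁)) := by
        ring
      rw [h2]
      linarith
    calc M * Real.exp (-F x) / x
        ≤ M * (A z₀ * Real.exp (z₀ ^ (2 - p) / ((2 - p) * c₁)) *
            Real.exp (-(x ^ (2 - p)) / ((2 - p) * c₁))) / x :=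
          by gcongr
      _ = M * A z₀ * Real.exp (z₀ ^ (2 - p) / ((2 - p) * c₁)) *
            (x⁻¹ * Real.exp (-(x ^ (2 - p)) / ((2 - p) * c₁))) := by
          field_simp
end

section
/- Let X be a real random variable with E[X²] < ∞, let z > 0 and c′ ∈ (0,1), and set B := E[X(X − z) 1_{X>z}]. If B ≤ c′ · E[X² 1_{X>z}], then (1 − 2c′) · B ≤ c′ · z² · P[X > z]. -/
open MeasureTheory

/-- With `B = E[X(X − z)1_{X>z}]`: if `B ≤ c′ E[X² 1_{X>z}]` for some `z > 0` and
`c′ ∈ (0,1)`, then `(1 − 2c′) B ≤ c′ z² P[X > z]`. -/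
theorem B_term_bound {Ω : Type*} {mΩ : MeasurableSpace Ω} (μ : Measure Ω)
    [IsProbabilityMeasure μ] (X : Ω → ℝ) (hXm : Measurable X)
    (hX2 : Integrable (fun ω => X ω ^ 2) μ) (z c' : ℝ) (hz : 0 < z)
    (hc' : c' ∈ Set.Ioo (0 : ℝ) 1)
    (hB : (∫ ω in {ω | z < X ω}, X ω * (X ω - z) ∂μ) ≤
      c' * ∫ ω in {ω | z < X ω}, X ω ^ 2 ∂μ) :
    (1 - 2 * c') * ∫ ω in {ω | z < X ω}, X ω * (X ω - z) ∂μ ≤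
      c' * z ^ 2 * (μ {ω | z < X ω}).toReal := by
  obtain ⟨hc0, hc1⟩ := hc'
  set s : Set Ω := {ω | z < X ω} with hs
  have hms : MeasurableSet s := measurableSet_lt measurable_const hXm
  have hX1 : Integrable X μ := by
    have h2 : MemLp X 2 μ := (memLp_two_iff_integrable_sq hXm.aestronglyMeasurable).mpr hX2
    exact h2.integrable one_le_two
  have hX2s : IntegrableOn (fun ω => X ω ^ 2) s μ := hX2.integrableOn
  have hX1s : IntegrableOn X s μ := hX1.integrableOn
  have hcs : IntegrableOn (fun _ => z) s μ :=
    integrableOn_const (measure_lt_top μ s).ne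
  have hXz : IntegrableOn (fun ω => X ω * (X ω - z)) s μ := by
    have heq : (fun ω => X ω * (X ω - z)) = fun ω => X ω ^ 2 - z * X ω := by
      ext ω; ring
    rw [heq]
    exact hX2s.sub (hX1s.const_mul z)
  have hXmz : IntegrableOn (fun ω => X ω - z) s μ := hX1s.sub hcs
  have hI2 : ∫ ω in s, X ω ^ 2 ∂μ
      = (∫ ω in s, X ω * (X ω - z) ∂μ) + z * ∫ ω in s, X ω ∂μ := by
    rw [← integral_const_mul, ← integral_add hXz (hX1s.const_mul z)]
    congr 1; ext ω; ring
  have hI1 : ∫ ω in s, X ω ∂μ = z * (μ s).toReal + ∫ ω in s, (X ω - z) ∂μ := by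
    rw [integral_sub hX1s hcs, setIntegral_const, smul_eq_mul, measureReal_def]
    ring
  have hmono : z * (∫ ω in s, (X ω - z) ∂μ) ≤ ∫ ω in s, X ω * (X ω - z) ∂μ := by
    rw [← integral_const_mul]
    refine setIntegral_mono_on (hXmz.const_mul z) hXz hms ?_
    intro ω hω
    have h1 : z < X ω := hω
    nlinarith
  have hBnn : c' * (z * ∫ ω in s, (X ω - z) ∂μ)
      ≤ c' * ∫ ω in s, X ω * (X ω - z) ∂μ :=
    mul_le_mul_of_nonneg_left hmono hc0.le
  rw [hI2, hI1] at hB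
  nlinarith [hB, hBnn]
end
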